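/- arXiv:1708.09696 — 2 statements merged into one kernel-verified Lean document; each statement's English description precedes it below -/
import Mathlib

section
/- Let X_a, Y_a (a ∈ A, A a finite set) be Hermitian positive semidefinite d×d complex matrices such that Σ_a X_a = Σ_a Y_a = K with ⟨K,K⟩ = 1 (where ⟨M,N⟩ = Tr(M*N)), and suppose Σ_a ⟨X_a, Y_a⟩ = 1. Then X_a = Y_a for all a ∈ A. -/
open Matrix ComplexOrder

/-!
Positive semidefinite matrices have nonnegative pairwise inner products, so expanding
`⟨K, K⟩ = ∑_{a,b} ⟨X_a, X_b⟩` and dropping the off-diagonal terms gives `∑_a ⟨X_a, X_a⟩ ≤ 1`,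
and likewise for `Y`. Hence `∑_a ‖X_a - Y_a‖² = ∑_a ⟨X_a, X_a⟩ + ∑_a ⟨Y_a, Y_a⟩ - 2 ≤ 0`.
-/

namespace Matrix

variable {ι m n 𝕜 : Type*} [Fintype ι] [Fintype m] [Fintype n] [RCLike 𝕜]

open scoped MatrixOrder in
theorem PosSemidef.trace_mul_nonneg {P Q : Matrix n n 𝕜} (hP : P.PosSemidef)
    (hQ : Q.PosSemidef) : 0 ≤ (P * Q).trace := by
  classical
  obtain ⟨B, rfl⟩ := CStarAlgebra.nonneg_iff_eq_star_mul_self.mp hQ.nonneg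
  rw [← mul_assoc, trace_mul_cycle]
  exact (hP.mul_mul_conjTranspose_same B).trace_nonneg

theorem sum_trace_conjTranspose_mul_le {U V : ι → Matrix n n 𝕜}
    (hU : ∀ a, (U a).PosSemidef) (hV : ∀ a, (V a).PosSemidef) :
    ∑ a, ((U a)ᴴ * V a).trace ≤ ((∑ a, U a)ᴴ * ∑ a, V a).trace := by
  simp only [conjTranspose_sum, Finset.sum_mul_sum, trace_sum]
  gcongr with a
  refine Finset.single_le_sum (f := fun b => ((U a)ᴴ * V b).trace) (fun b _ => ?_)
    (Finset.mem_univ a)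
  rw [(hU a).isHermitian.eq]
  exact (hU a).trace_mul_nonneg (hV b)

theorem trace_conjTranspose_mul_eq_star_trace (M N : Matrix m n 𝕜) :
    (Nᴴ * M).trace = star (Mᴴ * N).trace := by
  rw [← trace_conjTranspose, conjTranspose_mul, conjTranspose_conjTranspose]

theorem eq_of_sum_trace_conjTranspose_mul_le {U V : ι → Matrix m n 𝕜}
    (h : ∑ a, ((U a)ᴴ * U a).trace + ∑ a, ((V a)ᴴ * V a).trace ≤
      ∑ a, ((U a)ᴴ * V a).trace + ∑ a, ((V a)ᴴ * U a).trace) :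
    U = V := by
  have hdist : ∑ a, ((U a - V a)ᴴ * (U a - V a)).trace ≤ 0 := by
    simp only [conjTranspose_sub, Matrix.sub_mul, Matrix.mul_sub, trace_sub,
      Finset.sum_sub_distrib]
    linear_combination h
  have hnonneg a : 0 ≤ ((U a - V a)ᴴ * (U a - V a)).trace :=
    (posSemidef_conjTranspose_mul_self _).trace_nonneg
  have hzero := (Fintype.sum_eq_zero_iff_of_nonneg hnonneg).mp
    (hdist.antisymm (Fintype.sum_nonneg hnonneg))
  funext a
  exact sub_eq_zero.mp (trace_conjTranspose_mul_self_eq_zero_iff.mp (congrFun hzero a))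

end Matrix

/-- If families of PSD matrices `X_a`, `Y_a` both sum to `K` with `⟨K,K⟩ = 1` and
`∑ₐ ⟨Xₐ, Yₐ⟩ = 1`, then `Xₐ = Yₐ` for all `a`. -/
theorem stmt_2 {A : Type*} [Fintype A] {d : ℕ}
    (X Y : A → Matrix (Fin d) (Fin d) ℂ) (K : Matrix (Fin d) (Fin d) ℂ)
    (hX : ∀ a, (X a).PosSemidef) (hY : ∀ a, (Y a).PosSemidef)
    (hXK : ∑ a, X a = K) (hYK : ∑ a, Y a = K)
    (hKK : Matrix.trace (Kᴴ * K) = 1)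
    (hsum : ∑ a, Matrix.trace ((X a)ᴴ * Y a) = 1) :
    ∀ a, X a = Y a := by
  have hXX : ∑ a, ((X a)ᴴ * X a).trace ≤ 1 := hKK ▸ hXK ▸ sum_trace_conjTranspose_mul_le hX hX
  have hYY : ∑ a, ((Y a)ᴴ * Y a).trace ≤ 1 := hKK ▸ hYK ▸ sum_trace_conjTranspose_mul_le hY hY
  have hYX : ∑ a, ((Y a)ᴴ * X a).trace = 1 := by
    simp only [trace_conjTranspose_mul_eq_star_trace (X _), ← star_sum, hsum, star_one]
  refine congrFun (eq_of_sum_trace_conjTranspose_mul_le ?_)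
  rw [hsum, hYX]
  exact add_le_add hXX hYY
end

section
/- Let P_{(s,a),(t,b)} be a matrix indexed by pairs in S×A (S, A finite) such that there exist Hermitian positive semidefinite matrices X_s^a ∈ ℂ^{d×d} of minimal size d with P_{(s,a),(t,b)} = Tr(X_s^a X_t^b), and suppose Σ_{a,b} P_{(s,a),(t,b)} = 1 for all s,t ∈ S. Then there exists a single positive semidefinite matrix K with Tr(K²) = 1 and Σ_a X_s^a = K for all s ∈ S. -/
open Matrix ComplexOrder

private lemma herm_trace_sq_zero {n : ℕ} (M : Matrix (Fin n) (Fin n) ℂ)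
    (hM : M.IsHermitian) (h : Matrix.trace (M * M) = 0) : M = 0 := by
  have h' : Matrix.trace (Mᴴ * M) = 0 := by rw [hM.eq]; exact h
  have h2 : ∑ i, ∑ j, Complex.normSq (M j i) = 0 := by
    have : ((∑ i, ∑ j, Complex.normSq (M j i) : ℝ) : ℂ) = 0 := by
      rw [← h']
      simp only [Matrix.trace, Matrix.diag, Matrix.mul_apply, Matrix.conjTranspose_apply]
      push_cast
      refine Finset.sum_congr rfl fun i _ => Finset.sum_congr rfl fun j _ => ?_
      rw [Complex.normSq_eq_conj_mul_self]
      rfl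
    exact_mod_cast this
  ext i j
  have hnn : ∀ i ∈ Finset.univ, (0:ℝ) ≤ ∑ j, Complex.normSq (M j i) :=
    fun i _ => Finset.sum_nonneg fun j _ => Complex.normSq_nonneg _
  have h3 := (Finset.sum_eq_zero_iff_of_nonneg hnn).mp h2 j (Finset.mem_univ j)
  have h4 := (Finset.sum_eq_zero_iff_of_nonneg
    (fun k _ => Complex.normSq_nonneg (M k j))).mp h3 i (Finset.mem_univ i)
  simpa using Complex.normSq_eq_zero.mp h4

/-- If `P` has a minimal-size Gram factorization `P_{(s,a),(t,b)} = Tr(X_s^a X_t^b)` by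
Hermitian PSD matrices and `∑_{a,b} P_{(s,a),(t,b)} = 1` for all `s, t`, then there is a
single PSD matrix `K` with `Tr(K²) = 1` and `∑ₐ X_s^a = K` for all `s`. -/
theorem stmt_3 {S A : Type*} [Fintype S] [Fintype A] [Nonempty S] {d : ℕ}
    (P : (S × A) → (S × A) → ℝ)
    (X : S → A → Matrix (Fin d) (Fin d) ℂ)
    (hpsd : ∀ s a, (X s a).PosSemidef)
    (hgram : ∀ s a t b, (P (s, a) (t, b) : ℂ) = Matrix.trace (X s a * X t b))
    (hmin : ∀ (d' : ℕ) (Y : S → A → Matrix (Fin d') (Fin d') ℂ),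
      (∀ s a, (Y s a).PosSemidef) →
      (∀ s a t b, (P (s, a) (t, b) : ℂ) = Matrix.trace (Y s a * Y t b)) → d ≤ d')
    (hsum : ∀ s t, ∑ a, ∑ b, P (s, a) (t, b) = 1) :
    ∃ K : Matrix (Fin d) (Fin d) ℂ, K.PosSemidef ∧ Matrix.trace (K * K) = 1 ∧
      ∀ s, ∑ a, X s a = K := by
  set K : S → Matrix (Fin d) (Fin d) ℂ := fun s => ∑ a, X s a with hK
  have hKpsd : ∀ s, (K s).PosSemidef := fun s =>
    Finset.sum_induction _ _ (fun a b ha hb => ha.add hb) Matrix.PosSemidef.zero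
      (fun a _ => hpsd s a)
  have htr : ∀ s t, Matrix.trace (K s * K t) = 1 := by
    intro s t
    have : Matrix.trace (K s * K t) = ∑ a, ∑ b, (P (s, a) (t, b) : ℂ) := by
      simp only [hK, Finset.sum_mul_sum, Matrix.trace_sum]
      exact Finset.sum_congr rfl fun a _ => Finset.sum_congr rfl fun b _ =>
        (hgram s a t b).symm
    rw [this]
    push_cast
    exact_mod_cast congrArg (fun r : ℝ => (r : ℂ)) (hsum s t)
  obtain ⟨s₀⟩ := ‹Nonempty S›
  refine ⟨K s₀, hKpsd s₀, htr s₀ s₀, fun s => ?_⟩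
  have hherm : ∀ s, (K s).IsHermitian := fun s => (hKpsd s).isHermitian
  have hzero : K s - K s₀ = 0 := by
    apply herm_trace_sq_zero _ ((hherm s).sub (hherm s₀))
    have : (K s - K s₀) * (K s - K s₀) =
        K s * K s - K s * K s₀ - K s₀ * K s + K s₀ * K s₀ := by noncomm_ring
    rw [this]
    simp only [Matrix.trace_add, Matrix.trace_sub, htr]
    ring
  have := sub_eq_zero.mp hzero
  simpa [hK] using this
end
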